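/- Let G be the free metabelian group of rank two, with free generators x and y, and let H be the subgroup of G generated by [y,x], [[y,x],y], and [[y,x],x]. Then dom_G^{𝒜²}(H) equals the commutator subgroup [G,G] of G, and H is properly contained in [G,G]. -/

import Mathlib

universe u v

/-- The dominion of a subgroup `H` of `G` in the class of groups `P`. -/
def dominion {G : Type v} [Group G] (P : (K : Type u) → [Group K] → Prop)
    (H : Subgroup G) : Set G :=
  {a : G | ∀ (K : Type u) [Group K], P K → ∀ f g : G →* K,
    (∀ h ∈ H, f h = g h) → f a = g a}

/-- The commutator `[a,b] = a⁻¹b⁻¹ab`. -/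
def commElem {G : Type v} [Group G] (a b : G) : G := a⁻¹ * b⁻¹ * a * b

/-- The class `𝒜²` of metabelian groups. -/
def Metabelian (K : Type u) [Group K] : Prop := derivedSeries K 2 = ⊥

instance : (derivedSeries (FreeGroup (Fin 2)) 2).Normal := derivedSeries_normal _ _

/-- The free metabelian group of rank two: the quotient of the free group on
two generators by its second derived subgroup. -/
abbrev FreeMetab : Type := FreeGroup (Fin 2) ⧸ derivedSeries (FreeGroup (Fin 2)) 2

/-!
Let `c = [y,x]` and let `f, g : G → K` agree on `H`, with `K` metabelian; put `A = f c = g c`.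
Since `[c,w] = c⁻¹ (w⁻¹ c w)`, agreement on `[c,y]` and `[c,x]` says that `f` and `g` conjugate
`A` alike by `y` and by `x`. The centralizer `C` of `A ∈ [K,K]` contains the abelian `[K,K]`, so
it is normal, and `f`, `g` composed with `K → K/C` agree on the generators, hence everywhere:
`f` and `g` agree on all conjugates of `c`, whose normal closure is `[G,G]`. Conversely the
abelianization separates `G` from `H ≤ [G,G]`. Finally `H ≠ [G,G]` is detected in `ℤ ≀ ℤ`,
where `H` lands in the subgroup of base elements vanishing at one coordinate while the conjugate
`x⁻² c x²` does not.
-/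

open Subgroup

open scoped commutatorElement

section CommElem

variable {G K : Type*} [Group G] [Group K]

theorem commElem_eq_commutatorElement (a b : G) : commElem a b = ⁅a⁻¹, b⁻¹⁆ := by
  simp [commElem, commutatorElement_def]

theorem commElem_mem_commutator (a b : G) : commElem a b ∈ commutator G := by
  rw [commElem_eq_commutatorElement, commutator_def]
  exact commutator_mem_commutator (mem_top _) (mem_top _)

theorem map_commElem (f : G →* K) (a b : G) : f (commElem a b) = commElem (f a) (f b) := by
  simp [commElem]

theorem commElem_eq_one_iff {a b : G} : commElem a b = 1 ↔ Commute a b := by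
  rw [commElem_eq_commutatorElement, commutatorElement_eq_one_iff_commute, Commute.inv_inv_iff]

theorem commElem_eq_mul_conj (c a : G) : commElem c a = c⁻¹ * (a⁻¹ * c * a) := by
  simp only [commElem, mul_assoc]

end CommElem

section Metabelian

variable {K : Type u} [Group K]

theorem Metabelian.of_isMulCommutative [IsMulCommutative K] : Metabelian K :=
  eq_bot_iff.mpr <| (derivedSeries_antitone K (by decide : 1 ≤ 2)).trans <|
    (derivedSeries_one K).trans_le (commutator_eq_bot K).le

theorem Metabelian.commutator_le_centralizer (hK : Metabelian K) {A : K}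
    (hA : A ∈ commutator K) : commutator K ≤ centralizer {A} := by
  intro B hB
  have hBA : ⁅B, A⁆ ∈ derivedSeries K 2 := by
    rw [derivedSeries_succ, derivedSeries_one]
    exact commutator_mem_commutator hB hA
  rw [hK, mem_bot, commutatorElement_eq_one_iff_mul_comm] at hBA
  exact mem_centralizer_singleton_iff.mpr hBA

theorem conj_eq_conj_iff_div_mem_centralizer {A u v : K} :
    u⁻¹ * A * u = v⁻¹ * A * v ↔ u / v ∈ centralizer {A} := by
  rw [mem_centralizer_singleton_iff, div_eq_mul_inv]
  constructor <;> intro h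
  · calc u * v⁻¹ * A = u * (v⁻¹ * A * v) * v⁻¹ := by group
      _ = u * (u⁻¹ * A * u) * v⁻¹ := by rw [h]
      _ = A * (u * v⁻¹) := by group
  · calc u⁻¹ * A * u = u⁻¹ * (A * (u * v⁻¹)) * v := by group
      _ = u⁻¹ * (u * v⁻¹ * A) * v := by rw [h]
      _ = v⁻¹ * A * v := by group

theorem Metabelian.conj_eq_conj_of_closure_eq_top (hK : Metabelian K) {A : K}
    (hA : A ∈ commutator K) {G : Type*} [Group G] {s : Set G} (hs : closure s = ⊤)
    {f g : G →* K} (hfg : ∀ w ∈ s, (f w)⁻¹ * A * f w = (g w)⁻¹ * A * g w) (w : G) :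
    (f w)⁻¹ * A * f w = (g w)⁻¹ * A * g w := by
  have := Normal.of_commutator_le K (hK.commutator_le_centralizer hA)
  let π := QuotientGroup.mk' (centralizer {A})
  have hπ : π.comp f = π.comp g := MonoidHom.eq_of_eqOn_dense hs fun w hw =>
    QuotientGroup.eq_iff_div_mem.mpr (conj_eq_conj_iff_div_mem_centralizer.mp (hfg w hw))
  exact conj_eq_conj_iff_div_mem_centralizer.mpr
    (QuotientGroup.eq_iff_div_mem.mp (DFunLike.congr_fun hπ w))

end Metabelian

section TwoGenerator

variable {G : Type v} [Group G] {x y : G}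

theorem commutator_le_normalClosure_commElem (hgen : closure {x, y} = ⊤) :
    commutator G ≤ normalClosure {commElem y x} := by
  let π := QuotientGroup.mk' (normalClosure {commElem y x})
  have hyx : Commute (π y) (π x) := by
    rw [← commElem_eq_one_iff, ← map_commElem, QuotientGroup.mk'_apply,
      QuotientGroup.eq_one_iff]
    exact subset_normalClosure rfl
  have hπgen : closure {π x, π y} = ⊤ := by
    rw [← Set.image_pair, ← MonoidHom.map_closure, hgen,
      map_top_of_surjective _ (QuotientGroup.mk'_surjective _)]
  have : IsMulCommutative (closure {π x, π y}) := isMulCommutative_closure (by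
    rintro a (rfl | rfl) b (rfl | rfl)
    exacts [rfl, hyx.symm.eq, hyx.eq, rfl])
  rw [commutator_def, commutator_le]
  intro g₁ _ g₂ _
  rw [← QuotientGroup.ker_mk' (normalClosure _), MonoidHom.mem_ker, map_commutatorElement,
    commutatorElement_eq_one_iff_mul_comm]
  exact setLike_mul_comm (s := closure {π x, π y}) (hπgen ▸ mem_top _) (hπgen ▸ mem_top _)

theorem commutator_subset_dominion (hgen : closure {x, y} = ⊤) {H : Subgroup G}
    (hc : commElem y x ∈ H) (hcy : commElem (commElem y x) y ∈ H)
    (hcx : commElem (commElem y x) x ∈ H) :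
    (commutator G : Set G) ⊆ dominion.{u} Metabelian H := by
  intro a ha K _ hK f g hfg
  set c := commElem y x
  have hgc : g c = f c := (hfg c hc).symm
  have hconj_gen : ∀ w ∈ ({x, y} : Set G), (f w)⁻¹ * f c * f w = (g w)⁻¹ * f c * g w := by
    rintro w (rfl | rfl)
    · refine mul_left_cancel (a := (f c)⁻¹) ?_
      simpa only [commElem_eq_mul_conj, map_mul, map_inv, hgc] using hfg _ hcx
    · refine mul_left_cancel (a := (f c)⁻¹) ?_
      simpa only [commElem_eq_mul_conj, map_mul, map_inv, hgc] using hfg _ hcy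
  have hA : f c ∈ commutator K := by rw [map_commElem]; exact commElem_mem_commutator _ _
  have hconj := hK.conj_eq_conj_of_closure_eq_top hA hgen hconj_gen
  have hcore : normalClosure {c} ≤ (f.eqLocus g).normalCore := by
    refine normalClosure_le_normal (Set.singleton_subset_iff.mpr fun b => ?_)
    show f (b * c * b⁻¹) = g (b * c * b⁻¹)
    simpa [hgc] using hconj b⁻¹
  exact normalCore_le _ (hcore (commutator_le_normalClosure_commElem hgen ha))

end TwoGenerator

theorem dominion_subset_commutator {G : Type v} [Group G] {H : Subgroup G}
    (hH : H ≤ commutator G) : dominion.{max v u} Metabelian H ⊆ (commutator G : Set G) := by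
  intro a ha
  let F : G →* ULift.{u} (Abelianization G) :=
    MulEquiv.ulift.symm.toMonoidHom.comp Abelianization.of
  have hF : F a = 1 := ha _ Metabelian.of_isMulCommutative F 1 fun h hh => by
    simpa [F, ← MonoidHom.mem_ker, Abelianization.ker_of] using hH hh
  simpa [F, ← MonoidHom.mem_ker, Abelianization.ker_of] using hF

namespace FreeMetab

def lift {K : Type u} [Group K] (hK : Metabelian K) (f : Fin 2 → K) : FreeMetab →* K :=
  QuotientGroup.lift _ (FreeGroup.lift f) fun w hw => by
    have := map_derivedSeries_le_derivedSeries (FreeGroup.lift f) 2 (mem_map_of_mem _ hw)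
    rwa [show derivedSeries K 2 = ⊥ from hK, mem_bot, ← MonoidHom.mem_ker] at this

theorem lift_mk_of {K : Type u} [Group K] (hK : Metabelian K) (f : Fin 2 → K) (i : Fin 2) :
    lift hK f (QuotientGroup.mk (FreeGroup.of i)) = f i := by
  rw [lift, QuotientGroup.lift_mk, FreeGroup.lift_apply_of]

theorem closure_mk_of_pair :
    Subgroup.closure {QuotientGroup.mk (FreeGroup.of 0), QuotientGroup.mk (FreeGroup.of 1)} =
      (⊤ : Subgroup FreeMetab) := by
  have hrange : Set.range (FreeGroup.of (α := Fin 2)) = {FreeGroup.of 0, FreeGroup.of 1} := by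
    ext; simp [Fin.exists_fin_two, eq_comm]
  rw [eq_comm, ← map_top_of_surjective _ (QuotientGroup.mk'_surjective _),
    ← FreeGroup.closure_range_of, MonoidHom.map_closure, hrange, Set.image_pair]
  rfl

end FreeMetab

namespace RegularWreathProduct

variable {D Q : Type u} [CommGroup D] [CommGroup Q]

theorem metabelian : Metabelian (D ≀ᵣ Q) := by
  have hbase : derivedSeries (D ≀ᵣ Q) 1 ≤ rightHom.ker := by
    rw [derivedSeries_one]
    exact Abelianization.commutator_subset_ker _
  rw [Metabelian, derivedSeries_succ, eq_bot_iff, commutator_le]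
  intro a ha b hb
  have ha1 : a.right = 1 := hbase ha
  have hb1 : b.right = 1 := hbase hb
  rw [mem_bot, commutatorElement_eq_one_iff_mul_comm]
  ext
  · simp [ha1, hb1, mul_comm]
  · simp [mul_comm]

def baseKerAt (q : Q) : Subgroup (D ≀ᵣ Q) where
  carrier := {w | w.right = 1 ∧ w.left q = 1}
  one_mem' := ⟨rfl, rfl⟩
  mul_mem' := by
    rintro a b ⟨ha, ha'⟩ ⟨hb, hb'⟩
    exact ⟨by simp [ha, hb], by simp [ha, ha', hb']⟩
  inv_mem' := by
    rintro a ⟨ha, ha'⟩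
    exact ⟨by simp [ha], by simp [ha, ha']⟩

theorem mem_baseKerAt {q : Q} {w : D ≀ᵣ Q} : w ∈ baseKerAt q ↔ w.right = 1 ∧ w.left q = 1 :=
  Iff.rfl

end RegularWreathProduct

section IntWreathInt

open RegularWreathProduct

local notation "ℤ≀ℤ" => Multiplicative ℤ ≀ᵣ Multiplicative ℤ

def wreathShift : ℤ≀ℤ := inl (.ofAdd 1)

def wreathBase : ℤ≀ℤ := ⟨Pi.mulSingle 1 (.ofAdd 1), 1⟩

/- In `ℤ ≀ ℤ`, `[y,x] ↦ δ₋₁ - δ₀`, `[[y,x],y] ↦ 0` and `[[y,x],x] ↦ δ₋₂ - 2δ₋₁ + δ₀`, while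
conjugation by `x²` shifts `δ₋₁ - δ₀` to `δ₋₃ - δ₋₂`; evaluation at `-3` tells them apart. -/
theorem conj_sq_commElem_not_mem_closure {G : Type*} [Group G] {x y : G} (φ : G →* ℤ≀ℤ)
    (hx : φ x = wreathShift) (hy : φ y = wreathBase) :
    (x * x)⁻¹ * commElem y x * (x * x) ∉
      closure {commElem y x, commElem (commElem y x) y, commElem (commElem y x) x} := by
  intro hmem
  have hle : closure {commElem y x, commElem (commElem y x) y, commElem (commElem y x) x} ≤
      (baseKerAt (.ofAdd (-3))).comap φ := by
    rw [closure_le]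
    rintro _ (rfl | rfl | rfl) <;>
      simp only [SetLike.mem_coe, mem_comap, map_commElem, hx, hy, mem_baseKerAt] <;> decide
  have := hle hmem
  simp only [mem_comap, map_mul, map_inv, map_commElem, hx, hy, mem_baseKerAt] at this
  revert this
  decide

end IntWreathInt

/-- In the free metabelian group of rank two, freely generated by `x` and `y`,
the `𝒜²`-dominion of the subgroup `H = ⟨[y,x], [[y,x],y], [[y,x],x]⟩` is the
whole commutator subgroup, and `H` is properly contained in the commutator
subgroup. -/
theorem dominion_freeMetab :
    let x : FreeMetab := QuotientGroup.mk (FreeGroup.of 0)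
    let y : FreeMetab := QuotientGroup.mk (FreeGroup.of 1)
    let H : Subgroup FreeMetab := Subgroup.closure
      {commElem y x, commElem (commElem y x) y, commElem (commElem y x) x}
    dominion Metabelian H = (commutator FreeMetab : Set FreeMetab) ∧
      H < commutator FreeMetab := by
  intro x y H
  have hc : commElem y x ∈ H := subset_closure (by simp)
  have hcy : commElem (commElem y x) y ∈ H := subset_closure (by simp)
  have hcx : commElem (commElem y x) x ∈ H := subset_closure (by simp)
  have hH : H ≤ commutator FreeMetab := by
    rw [closure_le]
    rintro _ (rfl | rfl | rfl) <;> exact commElem_mem_commutator _ _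
  let φ := FreeMetab.lift RegularWreathProduct.metabelian ![wreathShift, wreathBase]
  refine ⟨(dominion_subset_commutator hH).antisymm
    (commutator_subset_dominion FreeMetab.closure_mk_of_pair hc hcy hcx), ?_⟩
  have hconj : (x * x)⁻¹ * commElem y x * (x * x) ∈ commutator FreeMetab := by
    simpa using (inferInstance : (commutator FreeMetab).Normal).conj_mem _
      (commElem_mem_commutator y x) (x * x)⁻¹
  exact lt_of_le_of_ne hH fun hEq => conj_sq_commElem_not_mem_closure φ
    (FreeMetab.lift_mk_of _ _ 0) (FreeMetab.lift_mk_of _ _ 1) (show _ ∈ H from hEq ▸ hconj)
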